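/- arXiv:1905.02828 — 6 statements merged into one kernel-verified Lean document; each statement's English description precedes it below -/
import Mathlib

section
/- With notation as in the SAT reduction for boolean conjunctive queries: the boolean query q (modeled by its family 𝒲 of minimal witnesses) is certain on I (i.e., true on every repair) if and only if the CNF formula φ = (⋀_{G∈𝒢} ⋁_{f_i∈G} x_i) ∧ (⋀_{W∈𝒲} ⋁_{f_i∈W} ¬x_i) is unsatisfiable. -/
/-!
A satisfying assignment of `φ` makes some fact of every group true, so picking one true fact per
group yields a repair all of whose facts are true; since every witness contains a false fact, the
query fails on that repair. Conversely, the characteristic assignment of a repair on which the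
query fails satisfies `φ`: it makes a fact of each group true and, since no witness lies inside
the repair, a fact of each witness false.
-/

theorem Finset.exists_card_inter_eq_one_of_pairwiseDisjoint {α : Type*} [DecidableEq α]
    {𝒢 : Finset (Finset α)}
    (hdisj : (𝒢 : Set (Finset α)).PairwiseDisjoint id) {p : α → Prop}
    (h : ∀ G ∈ 𝒢, ∃ f ∈ G, p f) :
    ∃ J : Finset α, J ⊆ 𝒢.sup id ∧ (∀ G ∈ 𝒢, (J ∩ G).card = 1) ∧ ∀ f ∈ J, p f := by
  choose pick hpick_mem hpick using h
  refine ⟨𝒢.attach.image fun G => pick G.1 G.2, ?_, fun G hG => ?_, ?_⟩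
  · simp only [Finset.image_subset_iff, Finset.mem_attach, forall_const, Subtype.forall]
    exact fun G hG => Finset.le_sup (f := id) hG (hpick_mem G hG)
  · suffices (𝒢.attach.image fun G => pick G.1 G.2) ∩ G = {pick G hG} by
      rw [this, Finset.card_singleton]
    ext f
    simp only [Finset.mem_inter, Finset.mem_image, Finset.mem_attach, true_and, Subtype.exists,
      Finset.mem_singleton]
    constructor
    · rintro ⟨⟨G', hG', rfl⟩, hfG⟩
      by_cases hGG' : G' = G
      · subst hGG'; rfl
      · exact absurd hfG (Finset.disjoint_left.mp (hdisj hG' hG hGG') (hpick_mem G' hG'))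
    · rintro rfl
      exact ⟨⟨G, hG, rfl⟩, hpick_mem G hG⟩
  · simp only [Finset.mem_image, Finset.mem_attach, true_and, Subtype.exists]
    rintro f ⟨G, hG, rfl⟩
    exact hpick G hG

theorem stmt_2_general {α : Type*} [DecidableEq α]
    (I : Finset α) (𝒢 : Finset (Finset α)) (𝒲 : Finset (Finset α))
    (hsub : ∀ G ∈ 𝒢, G ⊆ I)
    (hdisj : ∀ G ∈ 𝒢, ∀ G' ∈ 𝒢, G ≠ G' → Disjoint G G') :
    (∀ J : Finset α, J ⊆ I → (∀ G ∈ 𝒢, (J ∩ G).card = 1) →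
        ∃ W ∈ 𝒲, W ⊆ J) ↔
    ¬ (∃ a : α → Bool,
        (∀ G ∈ 𝒢, ∃ f ∈ G, a f = true) ∧ (∀ W ∈ 𝒲, ∃ f ∈ W, a f = false)) := by
  constructor
  · rintro hcertain ⟨a, hgroups, hwitnesses⟩
    obtain ⟨J, hJ𝒢, hJrepair, hJtrue⟩ :=
      Finset.exists_card_inter_eq_one_of_pairwiseDisjoint hdisj hgroups
    obtain ⟨W, hW, hWJ⟩ := hcertain J (hJ𝒢.trans (Finset.sup_le hsub)) hJrepair
    obtain ⟨f, hfW, hf⟩ := hwitnesses W hW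
    simp [hJtrue f (hWJ hfW)] at hf
  · intro hunsat J hJI hJrepair
    by_contra! hfails
    refine hunsat ⟨fun f => decide (f ∈ J), fun G hG => ?_, fun W hW => ?_⟩
    · obtain ⟨f, hf⟩ := Finset.card_pos.mp (hJrepair G hG ▸ one_pos)
      exact ⟨f, (Finset.mem_inter.mp hf).2, decide_eq_true (Finset.mem_inter.mp hf).1⟩
    · obtain ⟨f, hfW, hfJ⟩ := Finset.not_subset.mp (hfails W hW)
      exact ⟨f, hfW, decide_eq_false hfJ⟩

/-- The boolean query (given by its minimal-witness family `𝒲`) is certain on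
`I` (true on every repair) iff the CNF formula `φ` of the reduction is
unsatisfiable. -/
theorem stmt_2 {α : Type*} [DecidableEq α]
    (I : Finset α) (𝒢 : Finset (Finset α)) (𝒲 : Finset (Finset α))
    (hne : ∀ G ∈ 𝒢, G.Nonempty) (hsub : ∀ G ∈ 𝒢, G ⊆ I)
    (hdisj : ∀ G ∈ 𝒢, ∀ G' ∈ 𝒢, G ≠ G' → Disjoint G G')
    (hcover : ∀ f ∈ I, ∃ G ∈ 𝒢, f ∈ G)
    (hW : ∀ W ∈ 𝒲, W ⊆ I ∧ W.Nonempty) :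
    (∀ J : Finset α, J ⊆ I → (∀ G ∈ 𝒢, (J ∩ G).card = 1) →
        ∃ W ∈ 𝒲, W ⊆ J) ↔
    ¬ (∃ a : α → Bool,
        (∀ G ∈ 𝒢, ∃ f ∈ G, a f = true) ∧ (∀ W ∈ 𝒲, ∃ f ∈ W, a f = false)) :=
  stmt_2_general I 𝒢 𝒲 hsub hdisj
end

section
/- Let I be a finite set of facts with key-equal groups 𝒢, and for each potential answer index l ∈ {1,...,N} let 𝒲^l be a family of subsets of I (the minimal witnesses of q[a_l]). Introduce variables x_i for facts and p_l for potential answers, and let φ = (⋀_{G∈𝒢} ⋁_{f_i∈G} x_i) ∧ (⋀_{l=1}^{N} ⋀_{W∈𝒲^l} ((⋁_{f_i∈W} ¬x_i) ∨ ¬p_l)). Then for each l, there exists a satisfying assignment of φ setting p_l to true if and only if a_l is not a consistent answer, i.e., there exists a repair J of I such that no W ∈ 𝒲^l is a subset of J. -/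
/-! A satisfying assignment with `p l = true` makes some fact of every key-equal group true;
picking one true fact per group gives a repair, and since `p l` is true every clause of `𝒲 l`
forces a false, hence unpicked, fact into each witness. Conversely, for a repair `J` avoiding all
witnesses of `𝒲 l`, set `x_i` to membership in `J` and make only `p l` true. -/

namespace Finset

variable {α ι : Type*} [DecidableEq α]

theorem exists_transversal_subset_of_forall_exists {𝒢 : Finset ι} {g : ι → Finset α}
    (hdisj : (𝒢 : Set ι).PairwiseDisjoint g) {P : α → Prop} (hP : ∀ G ∈ 𝒢, ∃ f ∈ g G, P f) :
    ∃ J : Finset α, J ⊆ 𝒢.sup g ∧ (∀ G ∈ 𝒢, (J ∩ g G).card = 1) ∧ ∀ f ∈ J, P f := by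
  choose pick hpick_mem hpick using hP
  refine ⟨𝒢.attach.image fun G => pick G.1 G.2, ?_, fun G hG => ?_, ?_⟩
  · simp only [subset_iff, mem_image, mem_attach, true_and, Subtype.exists]
    rintro _ ⟨G, hG, rfl⟩
    exact mem_sup.mpr ⟨G, hG, hpick_mem G hG⟩
  · refine card_eq_one.mpr ⟨pick G hG, ext fun f => ?_⟩
    simp only [mem_inter, mem_image, mem_attach, true_and, Subtype.exists, mem_singleton]
    constructor
    · rintro ⟨⟨G', hG', rfl⟩, hfG⟩
      obtain rfl := hdisj.elim_finset hG' hG _ (hpick_mem G' hG') hfG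
      rfl
    · rintro rfl
      exact ⟨⟨G, hG, rfl⟩, hpick_mem G hG⟩
  · simp only [mem_image, mem_attach, true_and, Subtype.exists]
    rintro _ ⟨G, hG, rfl⟩
    exact hpick G hG

end Finset

open Finset in
theorem stmt_4_general {α : Type*} [DecidableEq α]
    (I : Finset α) (𝒢 : Finset (Finset α)) (N : ℕ)
    (𝒲 : Fin N → Finset (Finset α))
    (hsub : ∀ G ∈ 𝒢, G ⊆ I)
    (hdisj : ∀ G ∈ 𝒢, ∀ G' ∈ 𝒢, G ≠ G' → Disjoint G G')
    (l : Fin N) :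
    (∃ (a : α → Bool) (p : Fin N → Bool),
        ((∀ G ∈ 𝒢, ∃ f ∈ G, a f = true) ∧
          (∀ l' : Fin N, ∀ W ∈ 𝒲 l', (∃ f ∈ W, a f = false) ∨ p l' = false)) ∧
        p l = true) ↔
    (∃ J : Finset α, J ⊆ I ∧ (∀ G ∈ 𝒢, (J ∩ G).card = 1) ∧
        ∀ W ∈ 𝒲 l, ¬ W ⊆ J) := by
  constructor
  · rintro ⟨a, p, ⟨hgroups, hclauses⟩, hpl⟩
    obtain ⟨J, hJ𝒢, hJG, hJa⟩ :=
      exists_transversal_subset_of_forall_exists (g := id) hdisj hgroups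
    refine ⟨J, hJ𝒢.trans (Finset.sup_le hsub), hJG, fun W hW hWJ => ?_⟩
    obtain ⟨f, hfW, hf⟩ := (hclauses l W hW).resolve_right (by simp [hpl])
    simp [hJa f (hWJ hfW)] at hf
  · rintro ⟨J, -, hJG, hJW⟩
    refine ⟨fun f => decide (f ∈ J), fun l' => decide (l' = l),
      ⟨fun G hG => ?_, fun l' W hW => ?_⟩, by simp⟩
    · obtain ⟨f, hf⟩ := card_pos.mp ((hJG G hG).symm ▸ Nat.one_pos)
      exact ⟨f, (mem_inter.mp hf).2, by simpa using (mem_inter.mp hf).1⟩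
    · by_cases hl : l' = l
      · subst hl
        obtain ⟨f, hfW, hfJ⟩ := not_subset.mp (hJW W hW)
        exact .inl ⟨f, hfW, by simpa using hfJ⟩
      · exact .inr (by simpa using hl)

/-- Non-boolean SAT reduction: for each potential answer index `l`, the CNF
formula `φ` has a satisfying assignment setting `p l` to true iff there is a
repair of `I` containing no minimal witness of `q[a_l]`, i.e. iff `a_l` is not
a consistent answer. -/
theorem stmt_4 {α : Type*} [DecidableEq α]
    (I : Finset α) (𝒢 : Finset (Finset α)) (N : ℕ)
    (𝒲 : Fin N → Finset (Finset α))
    (hne : ∀ G ∈ 𝒢, G.Nonempty) (hsub : ∀ G ∈ 𝒢, G ⊆ I)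
    (hdisj : ∀ G ∈ 𝒢, ∀ G' ∈ 𝒢, G ≠ G' → Disjoint G G')
    (hcover : ∀ f ∈ I, ∃ G ∈ 𝒢, f ∈ G)
    (hW : ∀ l : Fin N, ∀ W ∈ 𝒲 l, W ⊆ I ∧ W.Nonempty)
    (l : Fin N) :
    (∃ (a : α → Bool) (p : Fin N → Bool),
        ((∀ G ∈ 𝒢, ∃ f ∈ G, a f = true) ∧
          (∀ l' : Fin N, ∀ W ∈ 𝒲 l', (∃ f ∈ W, a f = false) ∨ p l' = false)) ∧
        p l = true) ↔
    (∃ J : Finset α, J ⊆ I ∧ (∀ G ∈ 𝒢, (J ∩ G).card = 1) ∧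
        ∀ W ∈ 𝒲 l, ¬ W ⊆ J) :=
  stmt_4_general I 𝒢 N 𝒲 hsub hdisj l
end

section
/- Let I be a finite set of facts, 𝒱 the family of minimal violations (so S ⊆ I is consistent iff no V ∈ 𝒱 is contained in S), 𝒩^i the near-violations w.r.t. fact f_i, and for each potential answer index l let 𝒲^l be the family of minimal witnesses of Q[a_l]. Consider the boolean formula φ' with fact variables x_i, near-violation variables y^i_j, and answer variables p_l, consisting of: (α) for each V ∈ 𝒱, the clause ⋁_{f_i∈V} ¬x_i; (β) for each l and W ∈ 𝒲^l, the clause (⋁_{f_i∈W} ¬x_i) ∨ ¬p_l; (γ) for each f_i ∈ I, the clause x_i ∨ ⋁_{N^i_j∈𝒩^i} y^i_j; (θ) for each y^i_j, the constraint y^i_j ↔ ⋀_{f_d∈N^i_j} x_d (with the empty conjunction being true). Then for each l, φ' has a satisfying assignment setting p_l to true if and only if there exists a repair J of I on which Q[a_l] is false, i.e., no W ∈ 𝒲^l is a subset of J. -/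
/-- Denial-constraint reduction: the boolean formula `φ'` (with `α`-clauses
from minimal violations, `β`-clauses from minimal witnesses and answer
variables, `γ`-clauses and `θ`-equivalences from near-violations) has a
satisfying assignment setting `p l` to true iff there exists a repair `J` of
`I` (maximal consistent subset) on which `Q[a_l]` is false, i.e., no minimal
witness `W ∈ 𝒲 l` is contained in `J`. -/
theorem stmt_8 {α : Type*} [DecidableEq α]
    (I : Finset α) (𝒱 : Finset (Finset α)) (N : ℕ)
    (𝒲 : Fin N → Finset (Finset α))
    (hV : ∀ V ∈ 𝒱, V ⊆ I ∧ V.Nonempty)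
    (hVmin : ∀ V ∈ 𝒱, ∀ V' ∈ 𝒱, V' ⊆ V → V' = V)
    (hW : ∀ l : Fin N, ∀ W ∈ 𝒲 l, W ⊆ I)
    (l : Fin N) :
    (∃ (x : α → Bool) (y : α → Finset α → Bool) (p : Fin N → Bool),
        (∀ V ∈ 𝒱, ∃ f ∈ V, x f = false) ∧
        (∀ l' : Fin N, ∀ W ∈ 𝒲 l', (∃ f ∈ W, x f = false) ∨ p l' = false) ∧
        (∀ f ∈ I, x f = true ∨ ∃ V ∈ 𝒱, f ∈ V ∧ y f V = true) ∧
        (∀ f ∈ I, ∀ V ∈ 𝒱, f ∈ V →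
          (y f V = true ↔ ∀ g ∈ V.erase f, x g = true)) ∧
        p l = true) ↔
    (∃ J : Finset α, J ⊆ I ∧ (∀ V ∈ 𝒱, ¬ V ⊆ J) ∧
        (∀ J' : Finset α, J' ⊆ I → (∀ V ∈ 𝒱, ¬ V ⊆ J') → J ⊆ J' → J' = J) ∧
        (∀ W ∈ 𝒲 l, ¬ W ⊆ J)) := by

  constructor
  · rintro ⟨x, y, p, hα, hβ, hγ, hθ, hpl⟩
    refine ⟨I.filter (fun f => x f = true), Finset.filter_subset _ _, ?_, ?_, ?_⟩
    · intro V hVmem hsub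
      obtain ⟨f, hf, hxf⟩ := hα V hVmem
      have := hsub hf
      simp [Finset.mem_filter, hxf] at this
    · intro J' hJ'I hJ'cons hsub
      apply Finset.Subset.antisymm _ hsub
      intro f hfJ'
      by_contra hfJ
      have hfI := hJ'I hfJ'
      have hxf : x f ≠ true := by
        intro h; exact hfJ (Finset.mem_filter.mpr ⟨hfI, h⟩)
      rcases hγ f hfI with h | ⟨V, hVmem, hfV, hyV⟩
      · exact hxf h
      · have hall := (hθ f hfI V hVmem hfV).mp hyV
        apply hJ'cons V hVmem
        intro g hg
        by_cases hgf : g = f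
        · subst hgf; exact hfJ'
        · have hge : g ∈ V.erase f := Finset.mem_erase.mpr ⟨hgf, hg⟩
          have hxg := hall g hge
          have hgI : g ∈ I := (hV V hVmem).1 hg
          exact hsub (Finset.mem_filter.mpr ⟨hgI, hxg⟩)
    · intro W hWmem hsub
      rcases hβ l W hWmem with ⟨f, hf, hxf⟩ | hp
      · have := hsub hf
        simp [Finset.mem_filter, hxf] at this
      · rw [hpl] at hp; exact absurd hp (by simp)
  · rintro ⟨J, hJI, hJcons, hJmax, hJW⟩
    refine ⟨fun f => decide (f ∈ J), fun f V => decide (V.erase f ⊆ J),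
      fun l' => decide (l' = l), ?_, ?_, ?_, ?_, by simp⟩
    · intro V hVmem
      obtain ⟨f, hf, hfJ⟩ := Finset.not_subset.mp (hJcons V hVmem)
      exact ⟨f, hf, by simp [hfJ]⟩
    · intro l' W hWmem
      by_cases hl : l' = l
      · subst hl
        obtain ⟨f, hf, hfJ⟩ := Finset.not_subset.mp (hJW W hWmem)
        exact Or.inl ⟨f, hf, by simp [hfJ]⟩
      · exact Or.inr (by simp [hl])
    · intro f hfI
      by_cases hfJ : f ∈ J
      · exact Or.inl (by simp [hfJ])
      · right
        have hne : ¬ (∀ V ∈ 𝒱, ¬ V ⊆ insert f J) := by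
          intro h
          have := hJmax (insert f J) (Finset.insert_subset hfI hJI) h
            (Finset.subset_insert f J)
          exact hfJ (this ▸ Finset.mem_insert_self f J)
        push_neg at hne
        obtain ⟨V, hVmem, hsub⟩ := hne
        have hfV : f ∈ V := by
          by_contra hfV
          exact hJcons V hVmem ((Finset.subset_insert_iff_of_notMem hfV).mp hsub)
        exact ⟨V, hVmem, hfV, by simp [Finset.subset_insert_iff.mp hsub]⟩
    · intro f hfI V hVmem hfV
      simp [Finset.subset_iff]
end

section
/- Let φ be a satisfiable CNF formula in which variables p_1,...,p_N occur only in negative literals, and suppose φ becomes satisfiable when all p_l are set to false. Run the following iterative procedure: maintain ψ consisting of φ as hard clauses plus soft unit clauses (p_l) for l in a set A (initially A = {1,...,N}); in each iteration, take an optimal MaxSAT solution of ψ; for each l ∈ A with p_l true in the solution, remove l from A, delete the soft clause (p_l) and all clauses containing ¬p_l, and add the hard unit clause (¬p_l); stop when no p_l is set to true. Then the procedure terminates after at most N iterations, and upon termination, l remains in A if and only if p_l is false in every satisfying assignment of φ. -/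
/-!
Each round either ends the run or removes at least one index from `A`, so the run stops
within `|A 0| = N` rounds. An index removed in round `j` had `p_l` true in the model
`(x j, p j)` of `φ`, so it is not a consistent answer. Conversely, when the optimum
sets every soft clause false, no model of `φ` can set a surviving `p_l` true: since the
`p`-variables occur only negatively, switching off every `p_m` with `m ∉ A` keeps it a
model, and it would then beat the optimum.
-/

open Finset

theorem Finset.exists_le_card_of_card_succ_lt {α : Type*} (A : ℕ → Finset α)
    (P : ℕ → Prop)
    (hA : ∀ i, ¬ P i → #(A (i + 1)) < #(A i)) : ∃ i ≤ #(A 0), P i := by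
  by_contra! h
  have hbound : ∀ i ≤ #(A 0) + 1, #(A i) + i ≤ #(A 0) := by
    intro i
    induction i with
    | zero => simp
    | succ j ih =>
      intro hj
      have := hA j (h j (by omega))
      have := ih (by omega)
      omega
  have := hbound (#(A 0) + 1) le_rfl
  omega

section EliminateWithMaxSAT

variable {α : Type*} [DecidableEq α] {A : ℕ → Finset α} {p : ℕ → α → Bool}

theorem mem_succ_iff_of_eq_sdiff_filter {i : ℕ}
    (hnext : A (i + 1) = A i \ (A i).filter (fun l => p i l = true)) {l : α} :
    l ∈ A (i + 1) ↔ l ∈ A i ∧ p i l = false := by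
  rw [hnext, mem_sdiff, mem_filter]
  cases p i l <;> simp

theorem card_succ_lt_of_exists_eq_true {i : ℕ}
    (hnext : A (i + 1) = A i \ (A i).filter (fun l => p i l = true))
    (hsupp : ∀ l ∉ A i, p i l = false) (hne : ¬ ∀ l, p i l = false) :
    #(A (i + 1)) < #(A i) := by
  obtain ⟨l, hl⟩ := not_forall.mp hne
  have hlA : l ∈ A i := by_contra fun h => hl (hsupp l h)
  have hremoved : l ∈ (A i).filter (fun l => p i l = true) :=
    mem_filter.mpr ⟨hlA, by simpa using hl⟩
  rw [hnext]
  exact card_lt_card (sdiff_ssubset (filter_subset _ _) ⟨l, hremoved⟩)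

theorem exists_eq_true_of_notMem
    (hnext : ∀ i, A (i + 1) = A i \ (A i).filter (fun l => p i l = true))
    {l : α} (hl0 : l ∈ A 0) {i : ℕ} (hli : l ∉ A i) : ∃ j, p j l = true := by
  by_contra! hfalse
  have hmem : ∀ j, l ∈ A j := by
    intro j
    induction j with
    | zero => exact hl0
    | succ j ih =>
      exact (mem_succ_iff_of_eq_sdiff_filter (hnext j)).mpr ⟨ih, by simpa using hfalse j⟩
  exact hli (hmem i)

end EliminateWithMaxSAT

theorem eq_false_of_optimum_eq_false {χ ι : Type*} [Fintype ι] [DecidableEq ι]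
    {Sat : (χ → Bool) → (ι → Bool) → Prop}
    (hneg : ∀ (x : χ → Bool) (p p' : ι → Bool), Sat x p →
      (∀ l, p' l = true → p l = true) → Sat x p')
    {s : Finset ι} {q : ι → Bool}
    (hopt : ∀ (x' : χ → Bool) (p' : ι → Bool), Sat x' p' → (∀ l ∉ s, p' l = false) →
      #{l | p' l = true} ≤ #{l | q l = true})
    (hq : ∀ l, q l = false) {l : ι} (hl : l ∈ s) {x' : χ → Bool} {p' : ι → Bool}
    (hsat : Sat x' p') : p' l = false := by
  set r : ι → Bool := fun m => p' m && decide (m ∈ s)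
  have hr : Sat x' r := hneg x' p' r hsat fun m hm => (Bool.and_eq_true _ _).mp hm |>.1
  have hcount := hopt x' r hr fun m hm => by simp [r, hm]
  have hqcount : #{l | q l = true} = 0 := by simp [hq]
  have hempty : ({m | r m = true} : Finset ι) = ∅ :=
    card_eq_zero.mp (Nat.le_zero.mp (hcount.trans_eq hqcount))
  have hrl : r l = false := by simpa using filter_eq_empty_iff.mp hempty (mem_univ l)
  simpa [r, hl] using hrl

theorem stmt_11_general {χ : Type*} (N : ℕ)
    (Sat : (χ → Bool) → (Fin N → Bool) → Prop)
    (hneg : ∀ (x : χ → Bool) (p p' : Fin N → Bool), Sat x p →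
      (∀ l, p' l = true → p l = true) → Sat x p')
    (A : ℕ → Finset (Fin N)) (x : ℕ → χ → Bool) (p : ℕ → Fin N → Bool)
    (hA0 : A 0 = Finset.univ)
    (hstep : ∀ i : ℕ,
      Sat (x i) (p i) ∧ (∀ l ∉ A i, p i l = false) ∧
      (∀ (x' : χ → Bool) (p' : Fin N → Bool), Sat x' p' →
        (∀ l ∉ A i, p' l = false) →
        (Finset.univ.filter fun l => p' l = true).card ≤
          (Finset.univ.filter fun l => p i l = true).card))
    (hnext : ∀ i : ℕ, A (i + 1) = A i \ (A i).filter (fun l => p i l = true)) :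
    ∃ i ≤ N, (∀ l : Fin N, p i l = false) ∧
      (∀ l : Fin N, l ∈ A i ↔
        ∀ (x' : χ → Bool) (p' : Fin N → Bool), Sat x' p' → p' l = false) := by
  obtain ⟨i, hiN, hall⟩ := exists_le_card_of_card_succ_lt A (fun i => ∀ l, p i l = false)
    fun i => card_succ_lt_of_exists_eq_true (hnext i) (hstep i).2.1
  rw [hA0, card_univ, Fintype.card_fin] at hiN
  refine ⟨i, hiN, hall, fun l => ⟨fun hl x' p' hsat => ?_, fun hforced => ?_⟩⟩
  · exact eq_false_of_optimum_eq_false hneg (hstep i).2.2 hall hl hsat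
  · by_contra hli
    obtain ⟨j, hj⟩ := exists_eq_true_of_notMem hnext (hA0 ▸ mem_univ l) hli
    simp [hforced (x j) (p j) (hstep j).1] at hj

/-- Correctness of the iterative MaxSAT elimination algorithm. `Sat x p`
expresses satisfaction of the CNF formula `φ`, where the `p`-variables occur
only negatively and `φ` is satisfiable with all `p`-variables false. The
algorithm maintains a set `A i` of surviving answer indices (`A 0 = univ`);
at step `i` it takes an optimal MaxSAT solution `(x i, p i)` of the instance
whose hard constraints are `φ` together with `(¬p_l)` for `l ∉ A i`
(equivalently: clauses containing `¬p_l` deleted), and whose soft clauses are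
`(p_l)` for `l ∈ A i`; then it removes from `A` every `l` with `p i l` true.
The procedure terminates within `N` iterations (some `p i` is all-false), and
then `l ∈ A i` iff `p_l` is false in every satisfying assignment of `φ`. -/
theorem stmt_11 {χ : Type*} (N : ℕ)
    (Sat : (χ → Bool) → (Fin N → Bool) → Prop)
    (hneg : ∀ (x : χ → Bool) (p p' : Fin N → Bool), Sat x p →
      (∀ l, p' l = true → p l = true) → Sat x p')
    (hsat : ∃ x : χ → Bool, Sat x (fun _ => false))
    (A : ℕ → Finset (Fin N)) (x : ℕ → χ → Bool) (p : ℕ → Fin N → Bool)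
    (hA0 : A 0 = Finset.univ)
    (hstep : ∀ i : ℕ,
      Sat (x i) (p i) ∧ (∀ l ∉ A i, p i l = false) ∧
      (∀ (x' : χ → Bool) (p' : Fin N → Bool), Sat x' p' →
        (∀ l ∉ A i, p' l = false) →
        (Finset.univ.filter fun l => p' l = true).card ≤
          (Finset.univ.filter fun l => p i l = true).card))
    (hnext : ∀ i : ℕ, A (i + 1) = A i \ (A i).filter (fun l => p i l = true)) :
    ∃ i ≤ N, (∀ l : Fin N, p i l = false) ∧
      (∀ l : Fin N, l ∈ A i ↔
        ∀ (x' : χ → Bool) (p' : Fin N → Bool), Sat x' p' → p' l = false) :=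
  stmt_11_general N Sat hneg A x p hA0 hstep hnext
end

section
/- Let φ be the CNF formula of the weighted MaxSAT reduction (hard clauses) in which each answer variable p_l occurs only negatively, and suppose setting all x-variables to true and all p-variables to false satisfies all hard clauses of the initial formula. Then at the beginning of every iteration i of the elimination algorithm (which in each round adds hard unit clauses (¬p_l) for some l's and removes clauses containing ¬p_l and the soft clauses (p_l)), every optimal solution of the current weighted MaxSAT instance ψ_i satisfies all clauses of the original hard formula φ. -/
/-- A clause over fact variables `χ` and answer variables `Fin N` in which
answer variables occur only negatively: positive `x`-literals, negative
`x`-literals, and negative `p`-literals. -/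
def clauseEval {χ : Type*} {N : ℕ} (C : Finset χ × Finset χ × Finset (Fin N))
    (x : χ → Bool) (p : Fin N → Bool) : Prop :=
  (∃ v ∈ C.1, x v = true) ∨ (∃ v ∈ C.2.1, x v = false) ∨ (∃ l ∈ C.2.2, p l = false)

theorem clauseEval_of_mem_of_eq_false {χ : Type*} {N : ℕ}
    {C : Finset χ × Finset χ × Finset (Fin N)} {x : χ → Bool} {p : Fin N → Bool}
    {l : Fin N} (hl : l ∈ C.2.2) (hpl : p l = false) : clauseEval C x p :=
  Or.inr (Or.inr ⟨l, hl, hpl⟩)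

/- `removed` is the set of answer indices eliminated before iteration `i`: the hard clauses of
`ψ_i` are the clauses of `H` without a literal `¬p_l`, `l ∈ removed` (`hhard`), and the units
`(¬p_l)`, `l ∈ removed` (`hforced`). -/
theorem stmt_12_general {χ : Type*} (N : ℕ)
    (H : Finset (Finset χ × Finset χ × Finset (Fin N)))
    (removed : Finset (Fin N)) (x : χ → Bool) (p : Fin N → Bool)
    (hhard : ∀ C ∈ H, (∀ l ∈ C.2.2, l ∉ removed) → clauseEval C x p)
    (hforced : ∀ l ∈ removed, p l = false) :
    ∀ C ∈ H, clauseEval C x p := by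
  intro C hC
  by_cases hkept : ∀ l ∈ C.2.2, l ∉ removed
  · exact hhard C hC hkept
  · -- a clause dropped from `ψ_i` is satisfied by the literal `¬p_l` that caused its removal
    obtain ⟨l, hl, hl_removed⟩ : ∃ l ∈ C.2.2, l ∈ removed := by simpa using hkept
    exact clauseEval_of_mem_of_eq_false hl (hforced l hl_removed)

/-- Lemma 1: let `H` be the hard clauses `φ` of the MaxSAT reduction (answer
variables occur only negatively) and suppose the all-x-true, all-p-false
assignment satisfies them. At any iteration, with `removed` the set of answer
indices eliminated so far, the current instance `ψ_i` keeps the clauses of `H`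
having no `¬p_l` literal with `l ∈ removed` and adds hard unit clauses
`(¬p_l)` for `l ∈ removed`. Every optimal solution of `ψ_i` (satisfying its
hard clauses and maximizing the number of true surviving `p`-variables)
satisfies all clauses of the original formula `φ`. -/
theorem stmt_12 {χ : Type*} [DecidableEq χ] (N : ℕ)
    (H : Finset (Finset χ × Finset χ × Finset (Fin N)))
    (hinit : ∀ C ∈ H, clauseEval C (fun _ => true) (fun _ => false))
    (removed : Finset (Fin N)) (x : χ → Bool) (p : Fin N → Bool)
    (hhard : ∀ C ∈ H, (∀ l ∈ C.2.2, l ∉ removed) → clauseEval C x p)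
    (hforced : ∀ l ∈ removed, p l = false)
    (hopt : ∀ (x' : χ → Bool) (p' : Fin N → Bool),
      (∀ C ∈ H, (∀ l ∈ C.2.2, l ∉ removed) → clauseEval C x' p') →
      (∀ l ∈ removed, p' l = false) →
      (Finset.univ.filter fun l => p' l = true).card ≤
        (Finset.univ.filter fun l => p l = true).card) :
    ∀ C ∈ H, clauseEval C x p :=
  stmt_12_general N H removed x p hhard hforced
end

section
/- Let I be a finite fact set with minimal-violation family 𝒱 and let 𝒲^l be the witness family of Q[a_l]. Then a_l is a consistent answer (Q[a_l] holds on every repair of I) if and only if for every consistent subset S of I with the property that each f ∈ I \ S has a near-violation contained in S, some W ∈ 𝒲^l is contained in S. -/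
/-!
Adding a fact `f` to a consistent set `S` breaks consistency exactly when some violation
`V ∋ f` has `V \ {f} ⊆ S`. Hence a consistent `S ⊆ I` is a repair iff every `f ∈ I \ S` has a
near-violation inside `S`, and both sides of the equivalence quantify over the same sets.
-/

namespace Repair

variable {α : Type*}

def IsConsistent (𝒱 : Finset (Finset α)) (S : Finset α) : Prop :=
  ∀ V ∈ 𝒱, ¬ V ⊆ S

def IsMaximalConsistentIn (I : Finset α) (𝒱 : Finset (Finset α)) (S : Finset α) : Prop :=
  ∀ J : Finset α, J ⊆ I → IsConsistent 𝒱 J → S ⊆ J → J = S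

theorem IsConsistent.anti {𝒱 : Finset (Finset α)} {S T : Finset α} (hT : IsConsistent 𝒱 T)
    (hST : S ⊆ T) : IsConsistent 𝒱 S :=
  fun V hV hVS => hT V hV (hVS.trans hST)

variable [DecidableEq α]

def HasNearViolationIn (𝒱 : Finset (Finset α)) (S : Finset α) (f : α) : Prop :=
  ∃ V ∈ 𝒱, f ∈ V ∧ V.erase f ⊆ S

variable {I S : Finset α} {𝒱 : Finset (Finset α)} {f : α}

theorem isConsistent_insert_iff (hS : IsConsistent 𝒱 S) :
    IsConsistent 𝒱 (insert f S) ↔ ¬ HasNearViolationIn 𝒱 S f := by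
  simp only [IsConsistent, HasNearViolationIn, Finset.subset_insert_iff, not_exists, not_and]
  refine forall₂_congr fun V hV => ⟨fun h _ => h, fun h hVS => ?_⟩
  by_cases hfV : f ∈ V
  · exact h hfV hVS
  · exact hS V hV (Finset.erase_eq_of_notMem hfV ▸ hVS)

theorem isMaximalConsistentIn_iff_forall_hasNearViolationIn (hSI : S ⊆ I)
    (hS : IsConsistent 𝒱 S) :
    IsMaximalConsistentIn I 𝒱 S ↔ ∀ f ∈ I \ S, HasNearViolationIn 𝒱 S f := by
  constructor
  · intro hmax f hf
    obtain ⟨hfI, hfS⟩ := Finset.mem_sdiff.mp hf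
    by_contra hnear
    have hins : insert f S = S := hmax _ (Finset.insert_subset hfI hSI)
      ((isConsistent_insert_iff hS).mpr hnear) (Finset.subset_insert f S)
    exact hfS (hins ▸ Finset.mem_insert_self f S)
  · intro hnear J hJI hJ hSJ
    refine le_antisymm (fun f hfJ => ?_) hSJ
    by_contra hfS
    have hinsJ : insert f S ⊆ J := Finset.insert_subset hfJ hSJ
    exact (isConsistent_insert_iff hS).mp (hJ.anti hinsJ)
      (hnear f (Finset.mem_sdiff.mpr ⟨hJI hfJ, hfS⟩))

end Repair

open Repair in
theorem stmt_19_general {α : Type*} [DecidableEq α]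
    (I : Finset α) (𝒱 : Finset (Finset α)) (𝒲 : Finset (Finset α)) :
    (∀ J : Finset α, J ⊆ I → (∀ V ∈ 𝒱, ¬ V ⊆ J) →
        (∀ J' : Finset α, J' ⊆ I → (∀ V ∈ 𝒱, ¬ V ⊆ J') → J ⊆ J' → J' = J) →
        ∃ W ∈ 𝒲, W ⊆ J) ↔
    (∀ S : Finset α, S ⊆ I → (∀ V ∈ 𝒱, ¬ V ⊆ S) →
        (∀ f ∈ I \ S, ∃ V ∈ 𝒱, f ∈ V ∧ V.erase f ⊆ S) →
        ∃ W ∈ 𝒲, W ⊆ S) :=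
  forall_congr' fun _ => forall_congr' fun hSI => forall_congr' fun hS =>
    imp_congr_left (isMaximalConsistentIn_iff_forall_hasNearViolationIn hSI hS)

/-- `a_l` is a consistent answer (its witness family `𝒲` hits every repair of
`I`, where repairs are the maximal consistent subsets w.r.t. the minimal
violations `𝒱`) iff every consistent subset `S ⊆ I` such that each fact
`f ∈ I \ S` has a near-violation (a set `V \ {f}` with `V ∈ 𝒱`, `f ∈ V`)
contained in `S`, contains some witness `W ∈ 𝒲`. -/
theorem stmt_19 {α : Type*} [DecidableEq α]
    (I : Finset α) (𝒱 : Finset (Finset α)) (𝒲 : Finset (Finset α))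
    (hV : ∀ V ∈ 𝒱, V.Nonempty ∧ V ⊆ I) :
    (∀ J : Finset α, J ⊆ I → (∀ V ∈ 𝒱, ¬ V ⊆ J) →
        (∀ J' : Finset α, J' ⊆ I → (∀ V ∈ 𝒱, ¬ V ⊆ J') → J ⊆ J' → J' = J) →
        ∃ W ∈ 𝒲, W ⊆ J) ↔
    (∀ S : Finset α, S ⊆ I → (∀ V ∈ 𝒱, ¬ V ⊆ S) →
        (∀ f ∈ I \ S, ∃ V ∈ 𝒱, f ∈ V ∧ V.erase f ⊆ S) →
        ∃ W ∈ 𝒲, W ⊆ S) :=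
  stmt_19_general I 𝒱 𝒲
end
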